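/- Let n ≥ 0, p > 0 and let I ⊆ {1,…,n+p} have cardinality p. The map φ_I is a bijection from PW_n onto PW_{n+p}^I. -/
import Mathlib


/-- The maximum letter of a word (a list of natural numbers), with `wmax [] = 0`. -/
def wmax (w : List ℕ) : ℕ := w.foldr max 0

/-- A word over the positive integers is packed if every letter from `1` to its maximum
occurs in it. -/
def IsPacked (w : List ℕ) : Prop :=
  (∀ x ∈ w, 0 < x) ∧ ∀ i : ℕ, 0 < i → i ≤ wmax w → i ∈ w

/-- `phi I w` inserts occurrences of the new maximum letter `wmax w + 1` so that they
end up exactly at the (1-based) positions in `I`; the remaining positions carry the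
letters of `w` in order. -/
def phi (I : Finset ℕ) (w : List ℕ) : List ℕ :=
  (List.range (w.length + I.card)).map (fun j =>
    if j + 1 ∈ I then wmax w + 1
    else w.getD ((List.range j).countP (fun k => decide (k + 1 ∉ I))) 0)

/-- The maximal letter of `w` occurs exactly at the (1-based) positions belonging to `I`. -/
def maxAt (w : List ℕ) (I : Finset ℕ) : Prop :=
  (∀ i ∈ I, 1 ≤ i ∧ i ≤ w.length) ∧
  ∀ j, j < w.length → (w.getD j 0 = wmax w ↔ j + 1 ∈ I)



namespace PhiBij

def cnt (I : Finset ℕ) (j : ℕ) : ℕ := (List.range j).countP (fun k => decide (k + 1 ∉ I))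

variable {I : Finset ℕ}

lemma cnt_succ (j : ℕ) : cnt I (j + 1) = cnt I j + if j + 1 ∈ I then 0 else 1 := by
  simp only [cnt, List.range_succ, List.countP_append, List.countP_singleton]
  split <;> simp_all

lemma cnt_mono : Monotone (cnt I) := by
  intro a b hab
  induction b, hab using Nat.le_induction with
  | base => rfl
  | succ b hb ih => rw [cnt_succ]; omega

lemma cnt_le (j : ℕ) : cnt I j ≤ j := by
  have := List.countP_le_length (l := List.range j) (p := fun k => decide (k + 1 ∉ I))
  simpa [cnt] using this

lemma cnt_succ_of_not_mem {j : ℕ} (hj : j + 1 ∉ I) : cnt I (j + 1) = cnt I j + 1 := by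
  rw [cnt_succ]; simp [hj]

lemma countP_bridge (N : ℕ) (q : ℕ → Bool) :
    (List.range N).countP q = ((Finset.range N).filter (fun k => q k = true)).card := by
  rw [Finset.card, Finset.filter_val, Finset.range_val, ← Multiset.countP_eq_card_filter,
    Multiset.range, Multiset.coe_countP]
  simp

lemma cnt_total {N : ℕ} (hI : I ⊆ Finset.Icc 1 N) : cnt I N = N - I.card := by
  have h1 : (List.range N).countP (fun k => decide (k + 1 ∈ I))
      = ((Finset.range N).filter (fun k => k + 1 ∈ I)).card := by
    simpa using countP_bridge N (fun k => decide (k + 1 ∈ I))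
  have h2 : ((Finset.range N).filter (fun k => k + 1 ∈ I)).card = I.card := by
    apply Finset.card_bij (fun k _ => k + 1)
    · intro a ha; simp at ha; exact ha.2
    · intro a ha b hb h; omega
    · intro b hb
      have h := hI hb
      simp only [Finset.mem_Icc] at h
      refine ⟨b - 1, ?_, by omega⟩
      simp only [Finset.mem_filter, Finset.mem_range]
      constructor
      · omega
      · have : b - 1 + 1 = b := by omega
        rw [this]; exact hb
  have h3 : cnt I N + (List.range N).countP (fun k => decide (k + 1 ∈ I)) = N := by
    have h4 := List.length_eq_countP_add_countP (l := List.range N)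
      (p := fun k => decide (k + 1 ∉ I))
    rw [List.length_range] at h4
    have h5 : ((List.range N).countP fun a => decide ¬(decide (a + 1 ∉ I) = true))
        = (List.range N).countP (fun k => decide (k + 1 ∈ I)) :=
      List.countP_congr (fun a _ => by simp)
    rw [h5] at h4
    rw [cnt]
    omega
  omega


lemma cnt_lt {j j' : ℕ} (h : j < j') (hj : j + 1 ∉ I) : cnt I j < cnt I j' := by
  have h1 := cnt_succ_of_not_mem hj
  have h2 : cnt I (j + 1) ≤ cnt I j' := cnt_mono h
  omega

lemma cnt_surj {n N : ℕ} (hn : cnt I N = n) {i : ℕ} (hi : i < n) :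
    ∃ j, j < N ∧ j + 1 ∉ I ∧ cnt I j = i := by
  have hex : ∃ j, i < cnt I (j + 1) := by
    rcases N with _ | N
    · simp [cnt] at hn; omega
    · exact ⟨N, by omega⟩
  classical
  let j := Nat.find hex
  have hj1 : i < cnt I (j + 1) := Nat.find_spec hex
  have hj2 : cnt I j ≤ i := by
    rcases Nat.eq_zero_or_pos j with h0 | h0
    · simp [h0, cnt]
    · have := Nat.find_min hex (m := j - 1) (by omega)
      have hjj : j - 1 + 1 = j := by omega
      rw [hjj] at this
      omega
  have hstep := cnt_succ (I := I) j
  have hnot : j + 1 ∉ I := by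
    intro hmem
    rw [if_pos hmem] at hstep
    omega
  rw [if_neg hnot] at hstep
  have hji : cnt I j = i := by omega
  refine ⟨j, ?_, hnot, hji⟩
  by_contra hje
  have : cnt I N ≤ cnt I j := cnt_mono (by omega)
  omega

lemma filter_getElem? {N j : ℕ} (hj : j < N) (hq : j + 1 ∉ I) :
    ((List.range N).filter (fun k => decide (k + 1 ∉ I)))[cnt I j]? = some j := by
  induction N with
  | zero => omega
  | succ N ih =>
    rw [List.range_succ, List.filter_append]
    have hlen : ((List.range N).filter (fun k => decide (k + 1 ∉ I))).length = cnt I N := by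
      rw [cnt, List.countP_eq_length_filter]
    rcases Nat.lt_or_ge j N with hlt | hge
    · rw [List.getElem?_append_left]
      · exact ih hlt
      · rw [hlen]
        have h6 := cnt_succ_of_not_mem hq
        have h7 : cnt I (j + 1) ≤ cnt I N := cnt_mono hlt
        omega
    · have hjN : j = N := by omega
      subst hjN
      rw [List.getElem?_append_right (by omega)]
      rw [hlen]
      simp [hq]


lemma le_wmax {w : List ℕ} {x : ℕ} (h : x ∈ w) : x ≤ wmax w := by
  induction w with
  | nil => simp at h
  | cons a t ih =>
    rcases List.mem_cons.mp h with h | h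
    · subst h; exact le_max_left _ _
    · exact le_trans (ih h) (le_max_right _ _)

lemma getD_le_wmax (w : List ℕ) (k : ℕ) : w.getD k 0 ≤ wmax w := by
  rcases Nat.lt_or_ge k w.length with h | h
  · rw [List.getD_eq_getElem _ _ h]
    exact le_wmax (List.getElem_mem _)
  · rw [List.getD_eq_default _ _ h]
    exact Nat.zero_le _

lemma mem_iff_getD {w : List ℕ} {x : ℕ} :
    x ∈ w ↔ ∃ k, k < w.length ∧ w.getD k 0 = x := by
  rw [List.mem_iff_getElem]
  constructor
  · rintro ⟨k, hk, he⟩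
    exact ⟨k, hk, by rw [List.getD_eq_getElem _ _ hk, he]⟩
  · rintro ⟨k, hk, he⟩
    exact ⟨k, hk, by rw [← List.getD_eq_getElem _ _ hk, he]⟩

lemma phi_length (w : List ℕ) : (phi I w).length = w.length + I.card := by
  simp [phi]

lemma phi_getD {w : List ℕ} {j : ℕ} (hj : j < w.length + I.card) :
    (phi I w).getD j 0 = if j + 1 ∈ I then wmax w + 1 else w.getD (cnt I j) 0 := by
  have hlen : j < (phi I w).length := by rw [phi_length]; exact hj
  rw [List.getD_eq_getElem _ _ hlen]
  simp only [phi, List.getElem_map, List.getElem_range]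
  rfl

def psi (I : Finset ℕ) (W : List ℕ) : List ℕ :=
  ((List.range W.length).filter (fun k => decide (k + 1 ∉ I))).map (fun j => W.getD j 0)

lemma psi_length (W : List ℕ) : (psi I W).length = cnt I W.length := by
  rw [psi, List.length_map, cnt, List.countP_eq_length_filter]

lemma psi_getD {W : List ℕ} {j : ℕ} (hj : j < W.length) (hq : j + 1 ∉ I) :
    (psi I W).getD (cnt I j) 0 = W.getD j 0 := by
  rw [psi, List.getD_eq_getElem?_getD, List.getElem?_map, filter_getElem? hj hq]
  rfl

lemma mem_psi {W : List ℕ} {x : ℕ} :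
    x ∈ psi I W ↔ ∃ j, j < W.length ∧ j + 1 ∉ I ∧ W.getD j 0 = x := by
  simp only [psi, List.mem_map, List.mem_filter, List.mem_range, decide_eq_true_eq]
  constructor
  · rintro ⟨j, ⟨hj, hq⟩, he⟩; exact ⟨j, hj, hq, he⟩
  · rintro ⟨j, hj, hq, he⟩; exact ⟨j, ⟨hj, hq⟩, he⟩


lemma wmax_le {w : List ℕ} {m : ℕ} (h : ∀ x ∈ w, x ≤ m) : wmax w ≤ m := by
  induction w with
  | nil => exact Nat.zero_le _
  | cons a t ih =>
    have : wmax (a :: t) = max a (wmax t) := rfl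
    rw [this]
    exact max_le (h a (by simp)) (ih fun x hx => h x (List.mem_cons_of_mem _ hx))

lemma getD_mem {w : List ℕ} {k : ℕ} (h : k < w.length) : w.getD k 0 ∈ w := by
  rw [List.getD_eq_getElem _ _ h]; exact List.getElem_mem _

lemma mem_phi' {w : List ℕ} {x : ℕ} :
    x ∈ phi I w ↔ ∃ j, j < w.length + I.card ∧
      (if j + 1 ∈ I then wmax w + 1 else w.getD (cnt I j) 0) = x := by
  simp only [phi, List.mem_map, List.mem_range]
  rfl

end PhiBij

open PhiBij in
theorem phi_bijOn (n p : ℕ) (hp : 0 < p) (I : Finset ℕ)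
    (hI : I ⊆ Finset.Icc 1 (n + p)) (hcard : I.card = p) :
    Set.BijOn (phi I) {w : List ℕ | IsPacked w ∧ w.length = n}
      {W : List ℕ | IsPacked W ∧ W.length = n + p ∧ maxAt W I} := by
  classical
  have hclen : cnt I (n + p) = n := by
    rw [cnt_total hI, hcard]; omega
  -- a position carrying the new maximum exists
  obtain ⟨i0, hi0⟩ := Finset.card_pos.mp (hcard ▸ hp)
  have hi0b : 1 ≤ i0 ∧ i0 ≤ n + p := Finset.mem_Icc.mp (hI hi0)
  refine ⟨?_, ?_, ?_⟩
  · -- MapsTo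
    rintro w ⟨⟨hpos, hpk⟩, hlen⟩
    have hN : w.length + I.card = n + p := by rw [hlen, hcard]
    have hmem_new : wmax w + 1 ∈ phi I w := by
      rw [mem_phi']
      refine ⟨i0 - 1, by omega, ?_⟩
      have : i0 - 1 + 1 = i0 := by omega
      rw [this, if_pos hi0]
    have hphile : ∀ x ∈ phi I w, x ≤ wmax w + 1 := by
      intro x hx
      rw [mem_phi'] at hx
      obtain ⟨j, hj, he⟩ := hx
      subst he
      split
      · exact le_rfl
      · exact le_trans (getD_le_wmax _ _) (Nat.le_succ _)
    have hwmax : wmax (phi I w) = wmax w + 1 :=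
      le_antisymm (wmax_le hphile) (le_wmax hmem_new)
    have hplen : (phi I w).length = n + p := by rw [phi_length, hN]
    refine ⟨⟨?_, ?_⟩, hplen, ?_, ?_⟩
    · -- positivity
      intro x hx
      rw [mem_phi'] at hx
      obtain ⟨j, hj, he⟩ := hx
      subst he
      split
      · omega
      · next hq =>
        have hcj : cnt I j < n := by
          have h1 : cnt I j < cnt I (n + p) := cnt_lt (by omega) hq
          omega
        exact hpos _ (getD_mem (by omega))
    · -- packed
      intro i hi1 hi2
      rw [hwmax] at hi2
      rcases Nat.lt_or_ge i (wmax w + 1) with hlt | hge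
      · have : i ∈ w := hpk i hi1 (by omega)
        obtain ⟨k, hk, hke⟩ := mem_iff_getD.mp this
        obtain ⟨j, hj, hq, hcj⟩ := cnt_surj hclen (show k < n by omega)
        rw [mem_phi']
        exact ⟨j, by omega, by rw [if_neg hq, hcj, hke]⟩
      · have : i = wmax w + 1 := by omega
        rw [this]; exact hmem_new
    · -- maxAt first
      intro i hi
      have := Finset.mem_Icc.mp (hI hi)
      rw [hplen]; omega
    · -- maxAt second
      intro j hj
      rw [hplen] at hj
      rw [phi_getD (by omega), hwmax]
      split
      · next h => simp [h]
      · next h =>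
        simp only [h, iff_false]
        have := getD_le_wmax w (cnt I j)
        omega
  · -- InjOn
    rintro w ⟨⟨hpos, hpk⟩, hlen⟩ w' ⟨⟨hpos', hpk'⟩, hlen'⟩ heq
    apply List.ext_getElem (by omega)
    intro k hk hk'
    rw [hlen] at hk
    obtain ⟨j, hj, hq, hcj⟩ := cnt_surj hclen hk
    have e1 : (phi I w).getD j 0 = w.getD k 0 := by
      rw [phi_getD (by rw [hlen, hcard]; omega), if_neg hq, hcj]
    have e2 : (phi I w').getD j 0 = w'.getD k 0 := by
      rw [phi_getD (by rw [hlen', hcard]; omega), if_neg hq, hcj]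
    rw [← List.getD_eq_getElem w 0 (by omega), ← List.getD_eq_getElem w' 0 (by omega),
      ← e1, ← e2, heq]
  · -- SurjOn
    rintro W ⟨⟨hWpos, hWpk⟩, hWlen, hmax1, hmax2⟩
    set w := psi I W with hw
    have hwlen : w.length = n := by rw [hw, psi_length, hWlen, hclen]
    have hMpos : 0 < wmax W := by
      have hj0 : i0 - 1 < W.length := by omega
      have : W.getD (i0 - 1) 0 = wmax W := by
        rw [(hmax2 (i0 - 1) hj0)]
        have : i0 - 1 + 1 = i0 := by omega
        rw [this]; exact hi0
      have := hWpos _ (getD_mem hj0)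
      omega
    have hup : ∀ x ∈ w, x < wmax W := by
      intro x hx
      rw [hw, mem_psi] at hx
      obtain ⟨j, hj, hq, he⟩ := hx
      have h1 : x ≤ wmax W := he ▸ getD_le_wmax _ _
      have h2 : x ≠ wmax W := by
        intro hcon
        exact hq ((hmax2 j hj).mp (he.trans hcon ▸ he ▸ hcon ▸ rfl))
      omega
    have hup' : wmax w ≤ wmax W - 1 := wmax_le (fun x hx => by have := hup x hx; omega)
    have hdown : wmax W - 1 ≤ wmax w := by
      rcases Nat.lt_or_ge (wmax W) 2 with h2 | h2
      · omega
      · have hiW : wmax W - 1 ∈ W := hWpk _ (by omega) (by omega)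
        obtain ⟨j, hj, hje⟩ := mem_iff_getD.mp hiW
        have hq : j + 1 ∉ I := by
          intro hcon
          have := (hmax2 j hj).mpr hcon
          omega
        exact le_wmax (mem_psi.mpr ⟨j, hj, hq, hje⟩)
    have hwW : wmax w + 1 = wmax W := by omega
    have hpacked : IsPacked w := by
      constructor
      · intro x hx
        rw [hw, mem_psi] at hx
        obtain ⟨j, hj, hq, he⟩ := hx
        exact he ▸ hWpos _ (getD_mem hj)
      · intro i hi1 hi2
        have hiW : i ∈ W := hWpk i hi1 (by omega)
        obtain ⟨j, hj, hje⟩ := mem_iff_getD.mp hiW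
        have hq : j + 1 ∉ I := by
          intro hcon
          have := (hmax2 j hj).mpr hcon
          omega
        exact mem_psi.mpr ⟨j, hj, hq, hje⟩
    refine ⟨w, ⟨hpacked, hwlen⟩, ?_⟩
    have hNlen : w.length + I.card = n + p := by rw [hwlen, hcard]
    apply List.ext_getElem (by rw [phi_length, hNlen, hWlen])
    intro j hj1 hj2
    rw [phi_length, hNlen] at hj1
    rw [← List.getD_eq_getElem _ 0, ← List.getD_eq_getElem _ 0]
    rw [phi_getD (by omega)]
    split
    · next h =>
      rw [hwW]
      exact ((hmax2 j (by omega)).mpr h).symm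
    · next h =>
      exact psi_getD (by omega) h
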